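/- Every $m$-point $k$-increasing metric space contains, isometrically, either an equilateral subspace with at least $\sqrt{m}$ points or a $k$-lacunary subspace with at least $\sqrt{m}$ points. -/

import Mathlib

/-!
The non-leaf vertices of a `k`-increasing tree form a single root path `p₀ ⊂ p₁ ⊂ ⋯`, so
every leaf of depth `d + 1` hangs off `p_d`. Two distinct leaves of the same depth therefore
have `lca = p_d`, while for leaves `x`, `y` of depths `d + 1 < e + 1` the `lca` is `p_d` and
`Δ(p_e) ≤ Δ(p_d)/k`. Grouping the `m` leaves by depth, either some depth carries `√m` leaves
(an equilateral subspace) or there are `√m` distinct depths, and one leaf from each, listed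
by increasing depth, is a `k`-lacunary subspace.
-/

/-- Longest common prefix of two paths (= least common ancestor of leaves of a rooted
tree encoded as lists of child indices). -/
def lcp : List ℕ → List ℕ → List ℕ
  | a :: as, b :: bs => if a = b then a :: lcp as bs else []
  | _, _ => []

lemma lcp_append (p s t : List ℕ) : lcp (p ++ s) (p ++ t) = p ++ lcp s t := by
  induction p with
  | nil => rfl
  | cons a p ih => simp [lcp, ih]

open Finset in
lemma Finset.exists_sqrt_le_card_fiber_or_card_image {α β : Type*} [DecidableEq β]
    (s : Finset α) (f : α → β) :
    (∃ b, √(#s : ℝ) ≤ #{a ∈ s | f a = b}) ∨ √(#s : ℝ) ≤ #(s.image f) := by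
  by_contra! ⟨hfiber, himage⟩
  have hs : (s.image f).Nonempty := by
    rw [image_nonempty, nonempty_iff_ne_empty]
    rintro rfl
    simp at himage
  have : (#s : ℝ) < #s := calc
    (#s : ℝ) = ∑ b ∈ s.image f, (#{a ∈ s | f a = b} : ℝ) := by
        exact_mod_cast card_eq_sum_card_image f s
    _ < ∑ _b ∈ s.image f, √(#s : ℝ) := sum_lt_sum_of_nonempty hs fun b _ => hfiber b
    _ = #(s.image f) * √(#s : ℝ) := by simp
    _ ≤ √(#s : ℝ) * √(#s : ℝ) := by gcongr
    _ = #s := Real.mul_self_sqrt (Nat.cast_nonneg _)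
  exact lt_irrefl _ this

namespace PathTree

open Finset

variable {T : Finset (List ℕ)} {u v x y : List ℕ} {k : ℝ} {Δ : List ℕ → ℝ}

def PrefixClosed (T : Finset (List ℕ)) : Prop := ∀ v ∈ T, ∀ u : List ℕ, u <+: v → u ∈ T

def IsInternal (T : Finset (List ℕ)) (v : List ℕ) : Prop := ∃ i : ℕ, v ++ [i] ∈ T

def IsLeaf (T : Finset (List ℕ)) (v : List ℕ) : Prop := v ∈ T ∧ ∀ i : ℕ, v ++ [i] ∉ T

def AtMostOneInternalChild (T : Finset (List ℕ)) : Prop :=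
  ∀ v ∈ T, ∀ i j : ℕ, v ++ [i] ∈ T → v ++ [j] ∈ T →
    IsInternal T (v ++ [i]) → IsInternal T (v ++ [j]) → i = j

lemma IsInternal.mem (hT : PrefixClosed T) (hv : IsInternal T v) : v ∈ T :=
  let ⟨_, hi⟩ := hv; hT _ hi v (List.prefix_append _ _)

lemma isInternal_of_prefix (hT : PrefixClosed T) (hu : u ∈ T) (hvu : v <+: u)
    (hlt : v.length < u.length) : IsInternal T v := by
  obtain ⟨s, rfl⟩ := hvu
  obtain _ | ⟨i, s⟩ := s
  · simp at hlt
  · exact ⟨i, hT _ hu _ ⟨s, by simp⟩⟩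

lemma isInternal_dropLast (hv : v ∈ T) (hne : v ≠ []) : IsInternal T v.dropLast :=
  ⟨v.getLast hne, by rwa [List.dropLast_append_getLast]⟩

lemma eq_nil_of_isLeaf_nil (hT : PrefixClosed T) (hleaf : IsLeaf T []) (hv : v ∈ T) : v = [] := by
  by_contra hne
  obtain ⟨i, hi⟩ := isInternal_of_prefix hT hv List.nil_prefix (List.length_pos_iff.2 hne)
  exact hleaf.2 i hi

lemma IsInternal.eq_of_length_eq (hT : PrefixClosed T) (hinc : AtMostOneInternalChild T)
    (hu : IsInternal T u) (hv : IsInternal T v) (hlen : u.length = v.length) : u = v := by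
  induction u using List.reverseRecOn generalizing v with
  | nil => exact (List.length_eq_zero_iff.1 hlen.symm).symm
  | append_singleton u a ih =>
    obtain rfl | ⟨v, b, rfl⟩ := List.eq_nil_or_concat' v
    · simp at hlen
    have hu' : IsInternal T u := ⟨a, hu.mem hT⟩
    have hv' : IsInternal T v := ⟨b, hv.mem hT⟩
    obtain rfl := ih hu' hv' (by simpa using hlen)
    rw [hinc u (hu'.mem hT) a b (hu.mem hT) (hv.mem hT) hu hv]

lemma IsInternal.prefix_of_length_lt (hT : PrefixClosed T) (hinc : AtMostOneInternalChild T)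
    (hv : IsInternal T v) (hu : u ∈ T) (hlt : v.length < u.length) : v <+: u := by
  have hw : IsInternal T (u.take v.length) :=
    isInternal_of_prefix hT hu (List.take_prefix _ _) (by simpa using hlt)
  rw [hv.eq_of_length_eq hT hinc hw (by simp [hlt.le])]
  exact List.take_prefix _ _

lemma lcp_eq_dropLast (hT : PrefixClosed T) (hinc : AtMostOneInternalChild T)
    (hx : IsLeaf T x) (hne : x ≠ []) (hy : y ∈ T) (hxy : x ≠ y) (hlen : x.length ≤ y.length) :
    lcp x y = x.dropLast := by
  obtain ⟨p, a, rfl⟩ := (List.eq_nil_or_concat' x).resolve_left hne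
  have hp : IsInternal T p := ⟨a, hx.1⟩
  obtain ⟨t, rfl⟩ := hp.prefix_of_length_lt hT hinc hy (by simp at hlen; omega)
  obtain _ | ⟨b, s⟩ := t
  · simp at hlen
  have hab : a ≠ b := by
    rintro rfl
    have hlt : (p ++ [a]).length < (p ++ a :: s).length := by
      refine lt_of_le_of_ne hlen fun h => hxy ?_
      exact List.IsPrefix.eq_of_length ⟨s, by simp⟩ h
    obtain ⟨i, hi⟩ := isInternal_of_prefix hT hy ⟨s, by simp⟩ hlt
    exact hx.2 i hi
  rw [lcp_append, lcp, if_neg hab]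
  simp

def IsHSTLabel (k : ℝ) (T : Finset (List ℕ)) (Δ : List ℕ → ℝ) : Prop :=
  ∀ v ∈ T, ∀ i : ℕ, v ++ [i] ∈ T → Δ (v ++ [i]) ≤ Δ v / k

lemma label_le_of_prefix (hk : 1 ≤ k) (hT : PrefixClosed T) (hΔpos : ∀ v ∈ T, 0 ≤ Δ v)
    (hΔ : IsHSTLabel k T Δ) (hv : v ∈ T) (huv : u <+: v) : Δ v ≤ Δ u := by
  obtain ⟨s, rfl⟩ := huv
  induction s using List.reverseRecOn with
  | nil => simp
  | append_singleton s a ih =>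
    have hs : u ++ s ∈ T := hT _ hv _ ⟨[a], by simp⟩
    calc Δ (u ++ (s ++ [a])) = Δ (u ++ s ++ [a]) := by rw [List.append_assoc]
      _ ≤ Δ (u ++ s) / k := hΔ _ hs a (by simpa using hv)
      _ ≤ Δ (u ++ s) := div_le_self (hΔpos _ hs) hk
      _ ≤ Δ u := ih hs

lemma label_le_div_of_prefix (hk : 1 ≤ k) (hT : PrefixClosed T) (hΔpos : ∀ v ∈ T, 0 ≤ Δ v)
    (hΔ : IsHSTLabel k T Δ) (hv : v ∈ T) (huv : u <+: v) (hlt : u.length < v.length) :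
    Δ v ≤ Δ u / k := by
  obtain ⟨_ | ⟨a, s⟩, rfl⟩ := huv
  · simp at hlt
  have hu : u ∈ T := hT _ hv u (List.prefix_append _ _)
  calc Δ (u ++ a :: s) ≤ Δ (u ++ [a]) :=
        label_le_of_prefix hk hT hΔpos hΔ hv ⟨s, by simp⟩
    _ ≤ Δ u / k := hΔ u hu a (hT _ hv _ ⟨s, by simp⟩)

def IsEquilateral (Δ : List ℕ → ℝ) (S : Finset (List ℕ)) : Prop :=
  ∃ c : ℝ, ∀ x ∈ S, ∀ y ∈ S, x ≠ y → Δ (lcp x y) = c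

def IsLacunary (k : ℝ) (Δ : List ℕ → ℝ) (S : Finset (List ℕ)) : Prop :=
  ∃ g : ℕ → List ℕ,
    (∀ i, i < S.card → g i ∈ S) ∧
    (∀ i j, i < j → j < S.card → g i ≠ g j) ∧
    ∃ a : ℕ → ℝ, (∀ i, i < S.card → 0 < a i) ∧
      (∀ i j, i ≤ j → j < S.card → a j ≤ a i) ∧
      (∀ i, i + 1 < S.card → a (i + 1) ≤ a i / k) ∧
      (∀ i j, i < j → j < S.card → Δ (lcp (g i) (g j)) = a i)

lemma isEquilateral_of_length_eq (hT : PrefixClosed T)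
    (hinc : AtMostOneInternalChild T) {S : Finset (List ℕ)} {n : ℕ}
    (hS : ∀ x ∈ S, IsLeaf T x ∧ x.length = n) : IsEquilateral Δ S := by
  rcases S.eq_empty_or_nonempty with rfl | ⟨x₀, hx₀⟩
  · exact ⟨0, by simp⟩
  refine ⟨Δ x₀.dropLast, fun x hx y hy hxy => ?_⟩
  have hne : ∀ z ∈ S, z ≠ [] := by
    rintro z hz rfl
    have hn : n = 0 := (hS _ hz).2.symm
    exact hxy (by rw [List.eq_nil_of_length_eq_zero ((hS x hx).2.trans hn),
      List.eq_nil_of_length_eq_zero ((hS y hy).2.trans hn)])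
  have hparent : x.dropLast = x₀.dropLast :=
    (isInternal_dropLast (hS x hx).1.1 (hne x hx)).eq_of_length_eq hT hinc
      (isInternal_dropLast (hS x₀ hx₀).1.1 (hne x₀ hx₀)) (by simp [(hS x hx).2, (hS x₀ hx₀).2])
  rw [lcp_eq_dropLast hT hinc (hS x hx).1 (hne x hx) (hS y hy).1.1 hxy
    (by rw [(hS x hx).2, (hS y hy).2]), hparent]

lemma label_dropLast_le_div (hk : 1 ≤ k) (hT : PrefixClosed T) (hinc : AtMostOneInternalChild T)
    (hΔpos : ∀ v ∈ T, 0 ≤ Δ v) (hΔ : IsHSTLabel k T Δ) (hx : x ∈ T) (hne : x ≠ []) (hy : y ∈ T)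
    (hlt : x.length < y.length) : Δ y.dropLast ≤ Δ x.dropLast / k := by
  have hy0 : y ≠ [] := List.ne_nil_of_length_pos ((Nat.zero_le _).trans_lt hlt)
  have hlt' : x.dropLast.length < y.dropLast.length := by
    have := List.length_pos_iff.2 hne
    simp only [List.length_dropLast]
    omega
  have hpy := (isInternal_dropLast hy hy0).mem hT
  exact label_le_div_of_prefix hk hT hΔpos hΔ hpy
    ((isInternal_dropLast hx hne).prefix_of_length_lt hT hinc hpy hlt') hlt'

lemma isLacunary_of_injOn_length (hk : 1 ≤ k) (hT : PrefixClosed T)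
    (hinc : AtMostOneInternalChild T) (hΔpos : ∀ v ∈ T, 0 ≤ Δ v) (hΔ : IsHSTLabel k T Δ)
    (hΔint : ∀ v, IsInternal T v → 0 < Δ v) {S : Finset (List ℕ)}
    (hS : ∀ x ∈ S, IsLeaf T x ∧ x ≠ []) (hinj : Set.InjOn List.length (S : Set (List ℕ))) :
    IsLacunary k Δ S := by
  classical
  set depths := S.image List.length
  have hfin : (Set.ofPred (· ∈ depths)).Finite := depths.finite_toSet
  have hcard : #hfin.toFinset = #S := by
    rw [Finset.finite_toSet_toFinset, Finset.card_image_of_injOn hinj]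
  set g : ℕ → List ℕ := fun i => Function.invFunOn List.length S (Nat.nth (· ∈ depths) i)
  have hg : ∀ i < #S, g i ∈ S ∧ (g i).length = Nat.nth (· ∈ depths) i := by
    intro i hi
    have h := Finset.mem_image.1 (Nat.nth_mem_of_lt_card hfin (hcard ▸ hi))
    exact ⟨Function.invFunOn_mem h, Function.invFunOn_eq h⟩
  have hlt : ∀ i j, i < j → j < #S → (g i).length < (g j).length := fun i j hij hj => by
    rw [(hg i (hij.trans hj)).2, (hg j hj).2]
    exact Nat.nth_lt_nth_of_lt_card hfin hij (hcard ▸ hj)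
  have hleaf : ∀ i < #S, IsLeaf T (g i) ∧ g i ≠ [] := fun i hi => hS _ (hg i hi).1
  have hstep : ∀ i j, i < j → j < #S → Δ (g j).dropLast ≤ Δ (g i).dropLast / k :=
    fun i j hij hj => label_dropLast_le_div hk hT hinc hΔpos hΔ (hleaf i (hij.trans hj)).1.1
      (hleaf i (hij.trans hj)).2 (hleaf j hj).1.1 (hlt i j hij hj)
  have hpos : ∀ i < #S, 0 < Δ (g i).dropLast := fun i hi =>
    hΔint _ (isInternal_dropLast (hleaf i hi).1.1 (hleaf i hi).2)
  refine ⟨g, fun i hi => (hg i hi).1, fun i j hij hj h => (hlt i j hij hj).ne (congrArg _ h),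
    fun i => Δ (g i).dropLast, hpos, fun i j hij hj => ?_,
    fun i hi => hstep i (i + 1) i.lt_succ_self hi, fun i j hij hj => ?_⟩
  · rcases hij.eq_or_lt with rfl | hij
    · exact le_rfl
    · exact (hstep i j hij hj).trans (div_le_self (hpos i (hij.trans hj)).le hk)
  · rw [lcp_eq_dropLast hT hinc (hleaf i (hij.trans hj)).1 (hleaf i (hij.trans hj)).2
      (hleaf j hj).1.1 (fun h => (hlt i j hij hj).ne (congrArg _ h)) (hlt i j hij hj).le]

end PathTree

open PathTree

theorem stmt_16_general (k : ℝ) (hk : 1 ≤ k) (m : ℕ)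
    (T : Finset (List ℕ))
    (hpref : ∀ v ∈ T, ∀ u : List ℕ, u <+: v → u ∈ T)
    (Δ : List ℕ → ℝ)
    (hΔpos : ∀ v ∈ T, 0 ≤ Δ v)
    (hΔ0 : ∀ v ∈ T, (Δ v = 0 ↔ ∀ i : ℕ, v ++ [i] ∉ T))
    (hHST : ∀ v ∈ T, ∀ i : ℕ, v ++ [i] ∈ T → Δ (v ++ [i]) ≤ Δ v / k)
    (hincr : ∀ v ∈ T, ∀ i j : ℕ, v ++ [i] ∈ T → v ++ [j] ∈ T →
      (∃ i' : ℕ, v ++ [i] ++ [i'] ∈ T) → (∃ j' : ℕ, v ++ [j] ++ [j'] ∈ T) → i = j)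
    (hm : m = Set.ncard {v : List ℕ | v ∈ T ∧ ∀ i : ℕ, v ++ [i] ∉ T}) :
    ∃ S : Finset (List ℕ),
      (∀ v ∈ S, v ∈ T ∧ ∀ i : ℕ, v ++ [i] ∉ T) ∧
      Real.sqrt m ≤ (S.card : ℝ) ∧
      ((∃ c : ℝ, ∀ x ∈ S, ∀ y ∈ S, x ≠ y → Δ (lcp x y) = c) ∨
       (∃ g : ℕ → List ℕ,
          (∀ i, i < S.card → g i ∈ S) ∧
          (∀ i j, i < j → j < S.card → g i ≠ g j) ∧
          ∃ a : ℕ → ℝ, (∀ i, i < S.card → 0 < a i) ∧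
            (∀ i j, i ≤ j → j < S.card → a j ≤ a i) ∧
            (∀ i, i + 1 < S.card → a (i + 1) ≤ a i / k) ∧
            (∀ i j, i < j → j < S.card → Δ (lcp (g i) (g j)) = a i))) := by
  classical
  set leaves := T.filter (IsLeaf T)
  have hleaves : ∀ v, v ∈ leaves ↔ IsLeaf T v := fun v =>
    Finset.mem_filter.trans (and_iff_right_of_imp And.left)
  have hm' : m = leaves.card := by
    rw [hm, ← Set.ncard_coe_finset]
    exact congrArg Set.ncard (Set.ext fun v => (hleaves v).symm)
  have hΔint : ∀ v, IsInternal T v → 0 < Δ v := fun v hv =>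
    (hΔpos v (hv.mem hpref)).lt_of_ne fun h => (hΔ0 v (hv.mem hpref)).1 h.symm _ hv.choose_spec
  -- For the one-point tree the lacunary labels `Δ (g i).dropLast` would all be `Δ [] = 0`.
  by_cases hnil : IsLeaf T []
  · have hm1 : m ≤ 1 := hm' ▸ Finset.card_le_one.2 fun x hx y hy =>
      (eq_nil_of_isLeaf_nil hpref hnil ((hleaves x).1 hx).1).trans
        (eq_nil_of_isLeaf_nil hpref hnil ((hleaves y).1 hy).1).symm
    exact ⟨{[]}, fun v hv => by rw [Finset.mem_singleton.1 hv]; exact hnil,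
      by simpa [Real.sqrt_le_one] using hm1, Or.inl ⟨0, by simp⟩⟩
  rcases leaves.exists_sqrt_le_card_fiber_or_card_image List.length with ⟨n, hn⟩ | himage
  · have hfiber : ∀ x ∈ {x ∈ leaves | x.length = n}, IsLeaf T x ∧ x.length = n := fun x hx =>
      ⟨(hleaves x).1 (Finset.mem_filter.1 hx).1, (Finset.mem_filter.1 hx).2⟩
    exact ⟨_, fun x hx => (hfiber x hx).1, hm' ▸ hn,
      Or.inl (isEquilateral_of_length_eq hpref hincr hfiber)⟩
  · obtain ⟨S, hSL, hinj, himg⟩ := Finset.exists_subset_injOn_image_eq_of_surjOn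
      (leaves : Set (List ℕ)) (leaves.image List.length) (by simpa using Set.surjOn_image _ _)
    have hSleaf : ∀ x ∈ S, IsLeaf T x ∧ x ≠ [] := fun x hx =>
      ⟨(hleaves x).1 (hSL hx), by rintro rfl; exact hnil ((hleaves _).1 (hSL hx))⟩
    refine ⟨S, fun x hx => (hSleaf x hx).1, ?_,
      Or.inr (isLacunary_of_injOn_length hk hpref hincr hΔpos hHST hΔint hSleaf hinj)⟩
    rwa [hm', ← Finset.card_image_of_injOn hinj, himg]

/-- every `m`-point `k`-increasing metric space — a `k`-HST (encoded as
a prefix-closed finite set `T` of paths with labels `Δ`, metric `Δ ∘ lca` on the set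
of leaves, with `m` leaves) in which each vertex has at most one non-leaf child —
contains, isometrically, either an equilateral subspace of at least `√m` points or a
`k`-lacunary subspace of at least `√m` points. -/
theorem stmt_16 (k : ℝ) (hk : 1 ≤ k) (m : ℕ)
    (T : Finset (List ℕ)) (hroot : [] ∈ T)
    (hpref : ∀ v ∈ T, ∀ u : List ℕ, u <+: v → u ∈ T)
    (Δ : List ℕ → ℝ)
    (hΔpos : ∀ v ∈ T, 0 ≤ Δ v)
    (hΔ0 : ∀ v ∈ T, (Δ v = 0 ↔ ∀ i : ℕ, v ++ [i] ∉ T))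
    (hHST : ∀ v ∈ T, ∀ i : ℕ, v ++ [i] ∈ T → Δ (v ++ [i]) ≤ Δ v / k)
    (hincr : ∀ v ∈ T, ∀ i j : ℕ, v ++ [i] ∈ T → v ++ [j] ∈ T →
      (∃ i' : ℕ, v ++ [i] ++ [i'] ∈ T) → (∃ j' : ℕ, v ++ [j] ++ [j'] ∈ T) → i = j)
    (hm : m = Set.ncard {v : List ℕ | v ∈ T ∧ ∀ i : ℕ, v ++ [i] ∉ T}) :
    ∃ S : Finset (List ℕ),
      (∀ v ∈ S, v ∈ T ∧ ∀ i : ℕ, v ++ [i] ∉ T) ∧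
      Real.sqrt m ≤ (S.card : ℝ) ∧
      ((∃ c : ℝ, ∀ x ∈ S, ∀ y ∈ S, x ≠ y → Δ (lcp x y) = c) ∨
       (∃ g : ℕ → List ℕ,
          (∀ i, i < S.card → g i ∈ S) ∧
          (∀ i j, i < j → j < S.card → g i ≠ g j) ∧
          ∃ a : ℕ → ℝ, (∀ i, i < S.card → 0 < a i) ∧
            (∀ i j, i ≤ j → j < S.card → a j ≤ a i) ∧
            (∀ i, i + 1 < S.card → a (i + 1) ≤ a i / k) ∧
            (∀ i j, i < j → j < S.card → Δ (lcp (g i) (g j)) = a i))) :=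
  stmt_16_general k hk m T hpref Δ hΔpos hΔ0 hHST hincr hm
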